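/- Let F : ℝ^n → ℝ^m be continuously differentiable and let 0 < a ≤ b and 0 < α_min ≤ α_max. Let {x^k} ⊆ ℝ^n, and for each k let B_k be a symmetric n×n matrix with aI ⪯ B_k ⪯ bI, let α^k_i ∈ [α_min, α_max] for i ∈ {1,…,m}, and let d^k be the unique minimizer over ℝ^n of d ↦ max_{i∈{1,…,m}} ⟨∇F_i(x^k), d⟩/α^k_i + (1/2)‖d‖_{B_k}². If the sequence {x^k} converges to x* ∈ ℝ^n and d^k → 0, then x* is Pareto critical for F. -/

import Mathlib

/-!
Suppose some direction `e` had `⟪∇F_i(x*), e⟫ < 0` for every `i`. By continuity of the gradients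
this persists, with a uniform margin, at `x^k` for large `k`, so a fixed small multiple `t • e`
gives subproblem values at most some `-δ < 0`, uniformly in `k` thanks to `α^k_i ≤ α_max` and
`B_k ⪯ bI`; the minimal values are then at most `-δ` too. On the other hand, since `B_k` is positive
semidefinite and `α^k_i ≥ α_min`, the minimal value at `x^k` is at least
`-‖∇F_1(x^k)‖ ‖d^k‖ / α_min`, which tends to `0` because `d^k → 0`.
-/

open scoped RealInnerProductSpace

/-- Maximum of a function over the (nonempty) finite index type `Fin m`. -/
noncomputable def fmax {m : ℕ} [NeZero m] (f : Fin m → ℝ) : ℝ :=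
  Finset.univ.sup' Finset.univ_nonempty f

/-- A point `x` is Pareto critical for `F` if there is no direction `d` with
`⟨∇F_i(x), d⟩ < 0` for all `i`. -/
def ParetoCritical {n m : ℕ} (F : Fin m → EuclideanSpace ℝ (Fin n) → ℝ)
    (x : EuclideanSpace ℝ (Fin n)) : Prop :=
  ¬∃ d : EuclideanSpace ℝ (Fin n), ∀ i, ⟪gradient (F i) x, d⟫ < 0

open Filter Topology

theorem ContDiff.continuous_gradient {F : Type*} [NormedAddCommGroup F] [InnerProductSpace ℝ F]
    [CompleteSpace F] {f : F → ℝ} (hf : ContDiff ℝ 1 f) : Continuous (gradient f) :=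
  (InnerProductSpace.toDual ℝ F).symm.continuous.comp (hf.continuous_fderiv one_ne_zero)

section fmax

variable {m : ℕ} [NeZero m] {f : Fin m → ℝ} {c : ℝ}

theorem le_fmax (f : Fin m → ℝ) (i : Fin m) : f i ≤ fmax f :=
  Finset.le_sup' f (Finset.mem_univ i)

theorem fmax_le (h : ∀ i, f i ≤ c) : fmax f ≤ c :=
  Finset.sup'_le _ _ fun i _ => h i

theorem fmax_lt_iff : fmax f < c ↔ ∀ i, f i < c := by
  simp [fmax, Finset.sup'_lt_iff]

end fmax

section Subproblem

variable {E : Type*} [NormedAddCommGroup E] [InnerProductSpace ℝ E] {m : ℕ} [NeZero m]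

/-- The objective of the Barzilai–Borwein subproblem. -/
noncomputable def bbObjective (g : Fin m → E) (α : Fin m → ℝ) (B : E →ₗ[ℝ] E) (d : E) : ℝ :=
  (fmax fun i => ⟪g i, d⟫ / α i) + ⟪d, B d⟫ / 2

theorem neg_norm_mul_norm_div_le_bbObjective {g : Fin m → E} {α : Fin m → ℝ} {B : E →ₗ[ℝ] E}
    {d : E} {αmin : ℝ} (hB : 0 ≤ ⟪d, B d⟫) (hαmin : 0 < αmin) (i : Fin m) (hα : αmin ≤ α i) :
    -(‖g i‖ * ‖d‖) / αmin ≤ bbObjective g α B d := by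
  have hαi : 0 < α i := hαmin.trans_le hα
  have hcs : -(‖g i‖ * ‖d‖) ≤ ⟪g i, d⟫ := neg_le_of_abs_le (abs_real_inner_le_norm _ _)
  calc -(‖g i‖ * ‖d‖) / αmin
      ≤ -(‖g i‖ * ‖d‖) / α i := by
        simp only [neg_div, neg_le_neg_iff]
        exact div_le_div_of_nonneg_left (by positivity) hαmin hα
    _ ≤ ⟪g i, d⟫ / α i := div_le_div_of_nonneg_right hcs hαi.le
    _ ≤ fmax fun i => ⟪g i, d⟫ / α i := le_fmax (fun i => ⟪g i, d⟫ / α i) i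
    _ ≤ bbObjective g α B d := le_add_of_nonneg_right (by positivity)

theorem bbObjective_smul_le {g : Fin m → E} {α : Fin m → ℝ} {B : E →ₗ[ℝ] E} {e : E}
    {c t αmax M : ℝ} (hc : 0 ≤ c) (hge : ∀ i, ⟪g i, e⟫ ≤ -c) (hα : ∀ i, α i ∈ Set.Ioc 0 αmax)
    (hM : ⟪e, B e⟫ ≤ M) (ht : 0 ≤ t) :
    bbObjective g α B (t • e) ≤ -t * c / αmax + t ^ 2 * M / 2 := by
  have hαmax : 0 < αmax := (hα 0).1.trans_le (hα 0).2
  have hlin : (fmax fun i => ⟪g i, t • e⟫ / α i) ≤ -t * c / αmax := fmax_le fun i => by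
    obtain ⟨hαi, hαi_le⟩ := hα i
    rw [real_inner_smul_right, div_le_div_iff₀ hαi hαmax]
    nlinarith [mul_le_mul_of_nonneg_left (hge i) ht, mul_nonneg ht hc]
  have hquad : ⟪t • e, B (t • e)⟫ = t ^ 2 * ⟪e, B e⟫ := by
    rw [map_smul, real_inner_smul_left, real_inner_smul_right]; ring
  unfold bbObjective
  rw [hquad]
  nlinarith [sq_nonneg t]

variable {g : ℕ → Fin m → E} {gStar : Fin m → E} {α : ℕ → Fin m → ℝ} {B : ℕ → E →ₗ[ℝ] E}
  {αmin αmax : ℝ}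

theorem exists_eventually_bbObjective_le_neg (hg : Tendsto g atTop (𝓝 gStar)) {e : E}
    (he : ∀ i, ⟪gStar i, e⟫ < 0) (hαmin : 0 < αmin) (hα : ∀ k i, α k i ∈ Set.Icc αmin αmax)
    {M : ℝ} (hM : ∀ k, ⟪e, B k e⟫ ≤ M) :
    ∃ δ > 0, ∃ v : E, ∀ᶠ k in atTop, bbObjective (g k) (α k) (B k) v ≤ -δ := by
  set C := fmax fun i => ⟪gStar i, e⟫
  have hC : C < 0 := fmax_lt_iff.2 he
  have hαmax : 0 < αmax := hαmin.trans_le ((hα 0 0).1.trans (hα 0 0).2)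
  have hαpos : ∀ k i, α k i ∈ Set.Ioc 0 αmax := fun k i =>
    ⟨hαmin.trans_le (hα k i).1, (hα k i).2⟩
  have hnear : ∀ᶠ k in atTop, ∀ i, ⟪g k i, e⟫ ≤ C / 2 := eventually_all.2 fun i =>
    ((((continuous_apply i).tendsto gStar).comp hg).inner tendsto_const_nhds).eventually
      (ge_mem_nhds (by linarith [le_fmax (fun i => ⟪gStar i, e⟫) i]))
  -- `max M 1 > 0` bounds the quadratic term whatever the sign of `M`
  set c := -C / 2 with hc_def
  set s := c / αmax with hs_def
  set N := max M 1
  have hN : 0 < N := lt_max_of_lt_right one_pos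
  have hc : 0 < c := by linarith
  have hs : 0 < s := div_pos hc hαmax
  refine ⟨s ^ 2 / (2 * N), by positivity, (s / N) • e, hnear.mono fun k hk => ?_⟩
  have hbound := bbObjective_smul_le hc.le (fun i => (hk i).trans_eq (by rw [hc_def]; ring))
    (hαpos k) ((hM k).trans (le_max_left M 1)) (by positivity : 0 ≤ s / N)
  calc bbObjective (g k) (α k) (B k) ((s / N) • e)
      ≤ -(s / N) * c / αmax + (s / N) ^ 2 * N / 2 := hbound
    _ = -(s ^ 2 / (2 * N)) := by rw [hs_def]; field_simp; ring

theorem eventually_neg_lt_bbObjective {d : ℕ → E} (hg : Tendsto g atTop (𝓝 gStar))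
    (hd : Tendsto d atTop (𝓝 0)) (hB : ∀ k u, 0 ≤ ⟪u, B k u⟫) (hαmin : 0 < αmin)
    (hα : ∀ k i, αmin ≤ α k i) {δ : ℝ} (hδ : 0 < δ) :
    ∀ᶠ k in atTop, -δ < bbObjective (g k) (α k) (B k) (d k) := by
  have hlow : Tendsto (fun k => -(‖g k 0‖ * ‖d k‖) / αmin) atTop (𝓝 0) := by
    simpa using ((((continuous_apply 0).tendsto gStar).comp hg).norm.mul hd.norm).neg.div_const
      αmin
  filter_upwards [hlow.eventually (lt_mem_nhds (neg_lt_zero.2 hδ))] with k hk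
  exact hk.trans_le (neg_norm_mul_norm_div_le_bbObjective (hB k (d k)) hαmin 0 (hα k 0))

end Subproblem

theorem stmt9_general {n m : ℕ} [NeZero m] (F : Fin m → EuclideanSpace ℝ (Fin n) → ℝ)
    (hF : ∀ i, ContDiff ℝ 1 (F i))
    (a b : ℝ) (ha : 0 < a)
    (αmin αmax : ℝ) (hαmin : 0 < αmin)
    (x : ℕ → EuclideanSpace ℝ (Fin n))
    (B : ℕ → EuclideanSpace ℝ (Fin n) →ₗ[ℝ] EuclideanSpace ℝ (Fin n))
    (hBa : ∀ k, ∀ u : EuclideanSpace ℝ (Fin n), a * ‖u‖ ^ 2 ≤ ⟪u, B k u⟫)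
    (hBb : ∀ k, ∀ u : EuclideanSpace ℝ (Fin n), ⟪u, B k u⟫ ≤ b * ‖u‖ ^ 2)
    (α : ℕ → Fin m → ℝ) (hα : ∀ k i, α k i ∈ Set.Icc αmin αmax)
    (d : ℕ → EuclideanSpace ℝ (Fin n))
    (hdmin : ∀ k, ∀ e : EuclideanSpace ℝ (Fin n),
      (fmax fun i => ⟪gradient (F i) (x k), d k⟫ / α k i) + ⟪d k, B k (d k)⟫ / 2 ≤
        (fmax fun i => ⟪gradient (F i) (x k), e⟫ / α k i) + ⟪e, B k e⟫ / 2)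
    (xStar : EuclideanSpace ℝ (Fin n))
    (hx : Filter.Tendsto x Filter.atTop (nhds xStar))
    (hd : Filter.Tendsto d Filter.atTop (nhds 0)) :
    ParetoCritical F xStar := by
  rintro ⟨e, he⟩
  have hgrad : Tendsto (fun k i => gradient (F i) (x k)) atTop
      (𝓝 fun i => gradient (F i) xStar) :=
    tendsto_pi_nhds.2 fun i => ((hF i).continuous_gradient.tendsto xStar).comp hx
  have hB : ∀ k u, 0 ≤ ⟪u, B k u⟫ := fun k u => (by positivity : 0 ≤ a * ‖u‖ ^ 2).trans (hBa k u)
  obtain ⟨δ, hδ, v, hv⟩ :=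
    exists_eventually_bbObjective_le_neg hgrad he hαmin hα fun k => hBb k e
  obtain ⟨k, hk_le, hk_lt⟩ := (hv.and (eventually_neg_lt_bbObjective hgrad hd hB hαmin
    (fun k i => (hα k i).1) hδ)).exists
  exact (hk_lt.trans_le ((hdmin k v).trans hk_le)).false

/-- If uniform bounds `aI ⪯ B_k ⪯ bI` and `α_min ≤ α^k_i ≤ α_max` hold,
`d^k` is the minimizer of the variable-metric Barzilai–Borwein subproblem at `x^k`,
`x^k → x*` and `d^k → 0`, then `x*` is Pareto critical. -/
theorem stmt9 {n m : ℕ} [NeZero m] (F : Fin m → EuclideanSpace ℝ (Fin n) → ℝ)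
    (hF : ∀ i, ContDiff ℝ 1 (F i))
    (a b : ℝ) (ha : 0 < a) (hab : a ≤ b)
    (αmin αmax : ℝ) (hαmin : 0 < αmin) (hαmm : αmin ≤ αmax)
    (x : ℕ → EuclideanSpace ℝ (Fin n))
    (B : ℕ → EuclideanSpace ℝ (Fin n) →ₗ[ℝ] EuclideanSpace ℝ (Fin n))
    (hsym : ∀ k, ∀ u v : EuclideanSpace ℝ (Fin n), ⟪B k u, v⟫ = ⟪u, B k v⟫)
    (hBa : ∀ k, ∀ u : EuclideanSpace ℝ (Fin n), a * ‖u‖ ^ 2 ≤ ⟪u, B k u⟫)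
    (hBb : ∀ k, ∀ u : EuclideanSpace ℝ (Fin n), ⟪u, B k u⟫ ≤ b * ‖u‖ ^ 2)
    (α : ℕ → Fin m → ℝ) (hα : ∀ k i, α k i ∈ Set.Icc αmin αmax)
    (d : ℕ → EuclideanSpace ℝ (Fin n))
    (hdmin : ∀ k, ∀ e : EuclideanSpace ℝ (Fin n),
      (fmax fun i => ⟪gradient (F i) (x k), d k⟫ / α k i) + ⟪d k, B k (d k)⟫ / 2 ≤
        (fmax fun i => ⟪gradient (F i) (x k), e⟫ / α k i) + ⟪e, B k e⟫ / 2)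
    (xStar : EuclideanSpace ℝ (Fin n))
    (hx : Filter.Tendsto x Filter.atTop (nhds xStar))
    (hd : Filter.Tendsto d Filter.atTop (nhds 0)) :
    ParetoCritical F xStar :=
  stmt9_general F hF a b ha αmin αmax hαmin x B hBa hBb α hα d hdmin xStar hx hd
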